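/- (Z Pauli twirl with measurement.) With B and B'_x as in the Z Pauli twirl lemma, for every density matrix ρ on ℂ² ⊗ H: (1/2)·∑_{b,r∈{0,1}} (|b⟩⟨b| H Zʳ ⊗ I) B (Zʳ⊗I) ρ (Zʳ⊗I) B† (Zʳ H |b⟩⟨b| ⊗ I) = ∑_{b,x∈{0,1}} (|b⟩⟨b| H ⊗ I) B'_x ρ B'_x† (H |b⟩⟨b| ⊗ I), where H = (1/√2)[[1,1],[1,−1]] is the Hadamard matrix. -/

import Mathlib

/-!
Conjugating by `Z ^ r` flips the sign of the `X`-part of `B`, and after the measurement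
`|b⟩⟨b| H` that `X` becomes a sign `(-1) ^ b` because `H X = Z H` and `|b⟩⟨b| Z = (-1) ^ b |b⟩⟨b|`.
So each branch equals `(K₀ + s K₁) ρ (K₀ + s K₁)ᴴ` with `s = (-1) ^ (b + r)`, and averaging over
`r` kills the cross terms.
-/

open Matrix Kronecker ComplexOrder

noncomputable def PauliX : Matrix (Fin 2) (Fin 2) ℂ := !![0,1;1,0]
noncomputable def PauliZ : Matrix (Fin 2) (Fin 2) ℂ := !![1,0;0,-1]
noncomputable def Had : Matrix (Fin 2) (Fin 2) ℂ :=
  (((Real.sqrt 2)⁻¹ : ℝ) : ℂ) • !![1,1;1,-1]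
noncomputable def proj (b : Fin 2) : Matrix (Fin 2) (Fin 2) ℂ :=
  Matrix.single b b 1

theorem half_smul_add_mul_mul_add_add_sub_mul_mul_sub {K A : Type*} [Field K] [NeZero (2 : K)]
    [Ring A] [Algebra K A] (a b c d ρ : A) :
    (1 / 2 : K) • ((a + b) * ρ * (c + d) + (a - b) * ρ * (c - d)) = a * ρ * c + b * ρ * d := by
  have h : (a + b) * ρ * (c + d) + (a - b) * ρ * (c - d) = (2 : K) • (a * ρ * c + b * ρ * d) := by
    rw [ofNat_smul_eq_nsmul]; noncomm_ring
  rw [h, smul_smul, one_div, inv_mul_cancel₀ two_ne_zero, one_smul]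

theorem pauliZ_conjTranspose : PauliZᴴ = PauliZ := by
  ext i j; fin_cases i <;> fin_cases j <;> simp [PauliZ]

theorem had_conjTranspose : Hadᴴ = Had := by
  ext i j; fin_cases i <;> fin_cases j <;> simp [Had]

theorem proj_conjTranspose (b : Fin 2) : (proj b)ᴴ = proj b := by
  simp [proj]

theorem pauliZ_mul_self : PauliZ * PauliZ = 1 := by
  ext i j; fin_cases i <;> fin_cases j <;> simp [PauliZ]

theorem pauliZ_mul_pauliX : PauliZ * PauliX = -PauliX * PauliZ := by
  ext i j; fin_cases i <;> fin_cases j <;> simp [PauliX, PauliZ]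

theorem had_mul_pauliX : Had * PauliX = PauliZ * Had := by
  ext i j; fin_cases i <;> fin_cases j <;> simp [Had, PauliX, PauliZ]

theorem proj_mul_pauliZ (b : Fin 2) : proj b * PauliZ = (-1 : ℂ) ^ (b : ℕ) • proj b := by
  ext i j; fin_cases b <;> fin_cases i <;> fin_cases j <;> simp [proj, PauliZ]

theorem pauliZ_pow_mul_pauliX_pow_mul_pauliZ_pow (r x : Fin 2) :
    PauliZ ^ (r : ℕ) * PauliX ^ (x : ℕ) * PauliZ ^ (r : ℕ)
      = (-1 : ℂ) ^ ((r : ℕ) * x) • PauliX ^ (x : ℕ) := by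
  fin_cases r <;> fin_cases x <;>
    simp [pauliZ_mul_self, pauliZ_mul_pauliX, Matrix.mul_assoc]

theorem proj_mul_pauliZ_pow (b : Fin 2) (n : ℕ) :
    proj b * PauliZ ^ n = (-1 : ℂ) ^ ((b : ℕ) * n) • proj b := by
  induction n with
  | zero => simp
  | succ n ih =>
    rw [pow_succ, ← Matrix.mul_assoc, ih, Matrix.smul_mul, proj_mul_pauliZ, smul_smul,
      mul_add, mul_one, pow_add]

theorem proj_mul_had_mul_pauliX_pow (b : Fin 2) (n : ℕ) :
    proj b * Had * PauliX ^ n = (-1 : ℂ) ^ ((b : ℕ) * n) • (proj b * Had) := by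
  have hHX : Had * PauliX ^ n = PauliZ ^ n * Had := SemiconjBy.pow_right had_mul_pauliX n
  rw [Matrix.mul_assoc, hHX, ← Matrix.mul_assoc, proj_mul_pauliZ_pow,
    Matrix.smul_mul]

theorem proj_mul_had_mul_conj_pauliZ_pow (b r x z : Fin 2) :
    proj b * Had * PauliZ ^ (r : ℕ) * (PauliX ^ (x : ℕ) * PauliZ ^ (z : ℕ)) * PauliZ ^ (r : ℕ)
      = (-1 : ℂ) ^ (((b : ℕ) + r) * x) • (proj b * Had * PauliZ ^ (z : ℕ)) := by
  have hZ : Commute (PauliZ ^ (z : ℕ)) (PauliZ ^ (r : ℕ)) := Commute.pow_pow_self _ _ _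
  calc _ = proj b * Had * (PauliZ ^ (r : ℕ) * PauliX ^ (x : ℕ) * PauliZ ^ (r : ℕ))
          * PauliZ ^ (z : ℕ) := by simp only [Matrix.mul_assoc, hZ.eq]
    _ = _ := by
      rw [pauliZ_pow_mul_pauliX_pow_mul_pauliZ_pow, Matrix.mul_smul, Matrix.smul_mul,
        proj_mul_had_mul_pauliX_pow, Matrix.smul_mul, smul_smul, ← pow_add, add_mul, add_comm]

section Kronecker

variable {m : Type*} [Fintype m] [DecidableEq m]

theorem half_smul_sum_sign_mul_mul_conjTranspose (K₀ K₁ ρ : Matrix m m ℂ) (b : ℕ) :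
    (1 / 2 : ℂ) • ∑ r : Fin 2,
        (K₀ + (-1 : ℂ) ^ (b + r) • K₁) * ρ * (K₀ + (-1 : ℂ) ^ (b + r) • K₁)ᴴ
      = K₀ * ρ * K₀ᴴ + K₁ * ρ * K₁ᴴ := by
  have hsq : (-1 : ℂ) ^ b * (-1) ^ b = 1 := by
    rw [← pow_add, ← two_mul, pow_mul]; norm_num
  simp only [Fin.sum_univ_two, Fin.val_zero, Fin.val_one, add_zero, pow_succ, mul_neg_one,
    conjTranspose_add, conjTranspose_smul, star_neg, star_pow, star_one, neg_smul,
    ← sub_eq_add_neg]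
  rw [half_smul_add_mul_mul_add_add_sub_mul_mul_sub]
  simp only [Matrix.smul_mul, Matrix.mul_smul, smul_smul, hsq, one_smul]

/-- `pauliSum`, `pauliZSum` and `zTwirlKraus` are `B`, `B'ₓ` and `(|b⟩⟨b| H ⊗ I) B'ₓ`. -/
noncomputable def pauliSum (Bc : Fin 2 → Fin 2 → Matrix m m ℂ) :
    Matrix (Fin 2 × m) (Fin 2 × m) ℂ :=
  ∑ x : Fin 2, ∑ z : Fin 2, (PauliX ^ (x : ℕ) * PauliZ ^ (z : ℕ)) ⊗ₖ Bc x z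

noncomputable def pauliZSum (Bc : Fin 2 → Fin 2 → Matrix m m ℂ) (x : Fin 2) :
    Matrix (Fin 2 × m) (Fin 2 × m) ℂ :=
  ∑ z : Fin 2, (PauliZ ^ (z : ℕ)) ⊗ₖ Bc x z

noncomputable def zTwirlKraus (Bc : Fin 2 → Fin 2 → Matrix m m ℂ) (b x : Fin 2) :
    Matrix (Fin 2 × m) (Fin 2 × m) ℂ :=
  ((proj b * Had) ⊗ₖ (1 : Matrix m m ℂ)) * pauliZSum Bc x

theorem zTwirlKraus_mul_mul_conjTranspose (Bc : Fin 2 → Fin 2 → Matrix m m ℂ) (b x : Fin 2)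
    (ρ : Matrix (Fin 2 × m) (Fin 2 × m) ℂ) :
    zTwirlKraus Bc b x * ρ * (zTwirlKraus Bc b x)ᴴ
      = ((proj b * Had) ⊗ₖ (1 : Matrix m m ℂ)) * pauliZSum Bc x * ρ * (pauliZSum Bc x)ᴴ *
          ((Had * proj b) ⊗ₖ (1 : Matrix m m ℂ)) := by
  simp only [zTwirlKraus, conjTranspose_mul, conjTranspose_kronecker, conjTranspose_one,
    had_conjTranspose, proj_conjTranspose, Matrix.mul_assoc]

theorem proj_had_pauliZ_pow_conj_pauliSum (Bc : Fin 2 → Fin 2 → Matrix m m ℂ) (b r : Fin 2) :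
    ((proj b * Had * PauliZ ^ (r : ℕ)) ⊗ₖ (1 : Matrix m m ℂ)) * pauliSum Bc
        * ((PauliZ ^ (r : ℕ)) ⊗ₖ (1 : Matrix m m ℂ))
      = zTwirlKraus Bc b 0 + (-1 : ℂ) ^ ((b : ℕ) + r) • zTwirlKraus Bc b 1 := by
  have hsum : ((proj b * Had * PauliZ ^ (r : ℕ)) ⊗ₖ (1 : Matrix m m ℂ)) * pauliSum Bc
        * ((PauliZ ^ (r : ℕ)) ⊗ₖ (1 : Matrix m m ℂ))
      = ∑ x : Fin 2, (-1 : ℂ) ^ (((b : ℕ) + r) * x) • zTwirlKraus Bc b x := by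
    simp only [pauliSum, zTwirlKraus, pauliZSum, Finset.mul_sum, Finset.sum_mul,
      Finset.smul_sum, ← mul_kronecker_mul, Matrix.mul_one, Matrix.one_mul,
      proj_mul_had_mul_conj_pauliZ_pow, smul_kronecker]
  simp [hsum, Fin.sum_univ_two]

theorem proj_had_pauliZ_pow_conj_pauliSum_mul_mul_conjTranspose
    (Bc : Fin 2 → Fin 2 → Matrix m m ℂ) (b r : Fin 2) (ρ : Matrix (Fin 2 × m) (Fin 2 × m) ℂ) :
    ((proj b * Had * PauliZ ^ (r : ℕ)) ⊗ₖ (1 : Matrix m m ℂ)) * pauliSum Bc *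
        ((PauliZ ^ (r : ℕ)) ⊗ₖ (1 : Matrix m m ℂ)) * ρ *
        ((PauliZ ^ (r : ℕ)) ⊗ₖ (1 : Matrix m m ℂ)) * (pauliSum Bc)ᴴ *
        ((PauliZ ^ (r : ℕ) * Had * proj b) ⊗ₖ (1 : Matrix m m ℂ))
      = (zTwirlKraus Bc b 0 + (-1 : ℂ) ^ ((b : ℕ) + r) • zTwirlKraus Bc b 1) * ρ *
          (zTwirlKraus Bc b 0 + (-1 : ℂ) ^ ((b : ℕ) + r) • zTwirlKraus Bc b 1)ᴴ := by
  rw [← proj_had_pauliZ_pow_conj_pauliSum]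
  simp only [conjTranspose_mul, conjTranspose_kronecker, conjTranspose_one, conjTranspose_pow,
    pauliZ_conjTranspose, had_conjTranspose, proj_conjTranspose, Matrix.mul_assoc]

end Kronecker

theorem stmt_7_general {m : Type*} [Fintype m] [DecidableEq m]
    (Bc : Fin 2 → Fin 2 → Matrix m m ℂ)
    (B : Matrix (Fin 2 × m) (Fin 2 × m) ℂ)
    (hB : B = ∑ x : Fin 2, ∑ z : Fin 2,
      ((PauliX ^ (x : ℕ) * PauliZ ^ (z : ℕ)) ⊗ₖ Bc x z))
    (B' : Fin 2 → Matrix (Fin 2 × m) (Fin 2 × m) ℂ)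
    (hB' : ∀ x, B' x = ∑ z : Fin 2, (PauliZ ^ (z : ℕ)) ⊗ₖ Bc x z)
    (ρ : Matrix (Fin 2 × m) (Fin 2 × m) ℂ) :
    (1/2 : ℂ) • ∑ b : Fin 2, ∑ r : Fin 2,
        ((proj b * Had * PauliZ ^ (r : ℕ)) ⊗ₖ (1 : Matrix m m ℂ)) * B *
          ((PauliZ ^ (r : ℕ)) ⊗ₖ (1 : Matrix m m ℂ)) * ρ *
          ((PauliZ ^ (r : ℕ)) ⊗ₖ (1 : Matrix m m ℂ)) * Bᴴ *
          ((PauliZ ^ (r : ℕ) * Had * proj b) ⊗ₖ (1 : Matrix m m ℂ))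
      = ∑ b : Fin 2, ∑ x : Fin 2,
        ((proj b * Had) ⊗ₖ (1 : Matrix m m ℂ)) * B' x * ρ * (B' x)ᴴ *
          ((Had * proj b) ⊗ₖ (1 : Matrix m m ℂ)) := by
  obtain rfl : B = pauliSum Bc := hB
  obtain rfl : B' = pauliZSum Bc := funext hB'
  rw [Finset.smul_sum]
  refine Finset.sum_congr rfl fun b _ => ?_
  simp only [proj_had_pauliZ_pow_conj_pauliSum_mul_mul_conjTranspose]
  rw [half_smul_sum_sign_mul_mul_conjTranspose, Fin.sum_univ_two,
    zTwirlKraus_mul_mul_conjTranspose, zTwirlKraus_mul_mul_conjTranspose]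

theorem stmt_7 {m : Type*} [Fintype m] [DecidableEq m]
    (Bc : Fin 2 → Fin 2 → Matrix m m ℂ)
    (B : Matrix (Fin 2 × m) (Fin 2 × m) ℂ)
    (hB : B = ∑ x : Fin 2, ∑ z : Fin 2,
      ((PauliX ^ (x : ℕ) * PauliZ ^ (z : ℕ)) ⊗ₖ Bc x z))
    (B' : Fin 2 → Matrix (Fin 2 × m) (Fin 2 × m) ℂ)
    (hB' : ∀ x, B' x = ∑ z : Fin 2, (PauliZ ^ (z : ℕ)) ⊗ₖ Bc x z)
    (ρ : Matrix (Fin 2 × m) (Fin 2 × m) ℂ)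
    (hρ : ρ.PosSemidef) (hρ1 : ρ.trace = 1) :
    (1/2 : ℂ) • ∑ b : Fin 2, ∑ r : Fin 2,
        ((proj b * Had * PauliZ ^ (r : ℕ)) ⊗ₖ (1 : Matrix m m ℂ)) * B *
          ((PauliZ ^ (r : ℕ)) ⊗ₖ (1 : Matrix m m ℂ)) * ρ *
          ((PauliZ ^ (r : ℕ)) ⊗ₖ (1 : Matrix m m ℂ)) * Bᴴ *
          ((PauliZ ^ (r : ℕ) * Had * proj b) ⊗ₖ (1 : Matrix m m ℂ))
      = ∑ b : Fin 2, ∑ x : Fin 2,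
        ((proj b * Had) ⊗ₖ (1 : Matrix m m ℂ)) * B' x * ρ * (B' x)ᴴ *
          ((Had * proj b) ⊗ₖ (1 : Matrix m m ℂ)) :=
  stmt_7_general Bc B hB B' hB' ρ
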